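/- Let (X,d) be a complete metric space, η : [0,∞) → [0,∞) with η(0) = 0, and φ : X → ℝ lower semicontinuous and bounded below on every bounded subset of X. Assume there exist x₀ ∈ X and a real a ≥ 0 with liminf_{d(x,x₀)→∞} φ(x)/d(x,x₀) > a. Suppose η is nondecreasing on [0,∞) and liminf_{t→0⁺} η(t)/t > 0. Then every mapping T : X → X satisfying η(d(x,Tx)) ≤ φ(x) − φ(Tx) for all x ∈ X has a fixed point. -/

import Mathlib

/-!
Ekeland's variational principle provides a point `x` minimal for the Brøndsted order
`y ≼ x ↔ c * d(x, y) ≤ φ x - φ y`, with `φ x` as close to `inf φ` as we like (`φ` is bounded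
below because it grows linearly at infinity). Near the diagonal `η(t) ≥ c t`, so a short step
`x ↦ T x` would go down in the Brøndsted order and must be trivial; a long step lowers `φ` by at
least `η(δ/2) ≥ c δ / 2` and would fall below `inf φ`. Ekeland's principle itself: the lower
sets of successive `2⁻ⁿ`-minimizers are nested, closed, and of diameter `O(2⁻ⁿ)`, so they meet in
a single minimal point.
-/

open Set Filter Topology Metric Function

section

variable {X : Type*} [MetricSpace X]

theorem bddBelow_range_of_nonneg_off_ball {φ : X → ℝ}
    (hbdd : ∀ S : Set X, Bornology.IsBounded S → BddBelow (φ '' S)) (x₀ : X) (r : ℝ)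
    (hfar : ∀ x, r ≤ dist x x₀ → 0 ≤ φ x) : BddBelow (range φ) := by
  refine ((hbdd (closedBall x₀ r) isBounded_closedBall).union (bddBelow_Ici (a := 0))).mono ?_
  rintro _ ⟨x, rfl⟩
  rcases le_total (dist x x₀) r with hx | hx
  · exact Or.inl (mem_image_of_mem φ (mem_closedBall.2 hx))
  · exact Or.inr (hfar x hx)

section Ekeland

def ekelandSet (φ : X → ℝ) (c : ℝ) (x : X) : Set X := {y | c * dist x y ≤ φ x - φ y}

variable {φ : X → ℝ} {c : ℝ} {x y : X}

@[simp]
theorem mem_ekelandSet : y ∈ ekelandSet φ c x ↔ c * dist x y ≤ φ x - φ y := Iff.rfl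

@[simp]
theorem self_mem_ekelandSet : x ∈ ekelandSet φ c x := by simp

theorem ekelandSet_subset (hc : 0 ≤ c) (hy : y ∈ ekelandSet φ c x) :
    ekelandSet φ c y ⊆ ekelandSet φ c x := fun z hz => by
  rw [mem_ekelandSet] at *
  have := mul_le_mul_of_nonneg_left (dist_triangle x y z) hc
  linarith

theorem isClosed_ekelandSet (hφ : LowerSemicontinuous φ) : IsClosed (ekelandSet φ c x) := by
  simp only [ekelandSet, le_sub_iff_add_le]
  exact ((continuous_const.mul (continuous_const.dist continuous_id)).lowerSemicontinuous.add
    hφ).isClosed_preimage (φ x)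

theorem ekelandSet_subset_closedBall (hc : 0 < c) {ε : ℝ}
    (hx : ∀ z ∈ ekelandSet φ c x, φ x ≤ φ z + ε) : ekelandSet φ c x ⊆ closedBall x (ε / c) := by
  intro y hy
  rw [mem_closedBall, dist_comm, le_div_iff₀' hc]
  have := hx y hy
  rw [mem_ekelandSet] at hy
  linarith

theorem exists_mem_ekelandSet_forall_le_add (hc : 0 ≤ c) (hbdd : BddBelow (range φ)) (x : X)
    {ε : ℝ} (hε : 0 < ε) : ∃ y ∈ ekelandSet φ c x, ∀ z ∈ ekelandSet φ c y, φ y ≤ φ z + ε := by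
  have hne : (φ '' ekelandSet φ c x).Nonempty := ⟨φ x, x, self_mem_ekelandSet, rfl⟩
  obtain ⟨_, ⟨y, hy, rfl⟩, hlt⟩ := exists_lt_of_csInf_lt hne (lt_add_of_pos_right _ hε)
  refine ⟨y, hy, fun z hz => ?_⟩
  have := csInf_le (hbdd.mono (image_subset_range _ _))
    (mem_image_of_mem φ (ekelandSet_subset hc hy hz))
  linarith

theorem exists_ekelandSet_eq_singleton [CompleteSpace X] (hφ : LowerSemicontinuous φ)
    (hbdd : BddBelow (range φ)) (hc : 0 < c) (x₀ : X) :
    ∃ x ∈ ekelandSet φ c x₀, ekelandSet φ c x = {x} := by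
  choose next next_mem next_le using fun (n : ℕ) (x : X) =>
    exists_mem_ekelandSet_forall_le_add hc.le hbdd x (ε := (1 / 2) ^ n) (by positivity)
  let u : ℕ → X := fun n => Nat.rec x₀ next n
  let s : ℕ → Set X := fun n => ekelandSet φ c (u (n + 1))
  have hs_anti : Antitone s :=
    antitone_nat_of_succ_le fun n => ekelandSet_subset hc.le (next_mem _ _)
  have hs_ball (n : ℕ) : s n ⊆ closedBall (u (n + 1)) ((1 / 2) ^ n / c) :=
    ekelandSet_subset_closedBall hc (next_le n (u n))
  have hs_bdd (n : ℕ) : Bornology.IsBounded (s n) := isBounded_closedBall.subset (hs_ball n)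
  have hs_diam : Tendsto (fun n => diam (s n)) atTop (𝓝 0) := by
    have hlim : Tendsto (fun n : ℕ => 2 * ((1 / 2 : ℝ) ^ n / c)) atTop (𝓝 (2 * (0 / c))) :=
      ((tendsto_pow_atTop_nhds_zero_of_lt_one (by norm_num) (by norm_num)).div_const c).const_mul 2
    rw [zero_div, mul_zero] at hlim
    refine squeeze_zero (fun _ => diam_nonneg) (fun n => ?_) hlim
    exact (diam_mono (hs_ball n) isBounded_closedBall).trans (diam_closedBall (by positivity))
  obtain ⟨x, hx⟩ := nonempty_iInter_of_nonempty_biInter (fun n => isClosed_ekelandSet hφ) hs_bdd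
    (fun N => ⟨u (N + 1), mem_iInter₂.2 fun n hn => hs_anti hn self_mem_ekelandSet⟩) hs_diam
  rw [mem_iInter] at hx
  refine ⟨x, ekelandSet_subset hc.le (next_mem 0 x₀) (hx 0),
    subset_antisymm (fun y hy => ?_) (singleton_subset_iff.2 self_mem_ekelandSet)⟩
  have hy_mem (n : ℕ) : y ∈ s n := ekelandSet_subset hc.le (hx n) hy
  exact dist_le_zero.1 <| ge_of_tendsto' hs_diam fun n =>
    dist_le_diam_of_mem (hs_bdd n) (hy_mem n) (hx n)

end Ekeland

theorem exists_isFixedPt_of_caristi_or_drop [CompleteSpace X] [Nonempty X] {φ : X → ℝ}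
    (hφ : LowerSemicontinuous φ) (hbdd : BddBelow (range φ)) {c ε : ℝ} (hc : 0 < c) (hε : 0 < ε)
    (T : X → X) (hT : ∀ x, T x ≠ x → c * dist x (T x) ≤ φ x - φ (T x) ∨ φ (T x) + ε ≤ φ x) :
    ∃ x, IsFixedPt T x := by
  obtain ⟨x₀, hx₀⟩ := exists_lt_of_ciInf_lt (lt_add_of_pos_right (⨅ x, φ x) hε)
  obtain ⟨x, hx, hmin⟩ := exists_ekelandSet_eq_singleton hφ hbdd hc x₀
  refine ⟨x, by_contra fun hne => ?_⟩
  rcases hT x hne with hcaristi | hdrop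
  · exact hne (hmin.subset hcaristi)
  · have hx_le : φ x ≤ φ x₀ := by
      linarith [mem_ekelandSet.1 hx, mul_nonneg hc.le (dist_nonneg (x := x₀) (y := x))]
    linarith [ciInf_le hbdd (T x)]

end

theorem li_theorem2_case_i_general {X : Type*} [MetricSpace X] [CompleteSpace X] [Nonempty X]
    (η : ℝ → ℝ)
    (φ : X → ℝ) (hlsc : LowerSemicontinuous φ)
    (hbdd : ∀ S : Set X, Bornology.IsBounded S → BddBelow (φ '' S))
    (x₀ : X) (a : ℝ) (ha : 0 ≤ a)
    (hliminf : ∃ b > a, ∃ r > (0 : ℝ), ∀ x : X, r ≤ dist x x₀ → b ≤ φ x / dist x x₀)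
    (hmono : ∀ s t : ℝ, 0 ≤ s → s ≤ t → η s ≤ η t)
    (hliminfη : ∃ c > (0 : ℝ), ∃ δ > (0 : ℝ), ∀ t : ℝ, 0 < t → t < δ → c * t ≤ η t)
    (T : X → X) (hT : ∀ x, η (dist x (T x)) ≤ φ x - φ (T x)) :
    ∃ x, T x = x := by
  obtain ⟨b, hb, r, hr, hlinear⟩ := hliminf
  obtain ⟨c, hc, δ, hδ, hsmall⟩ := hliminfη
  have hφ_bdd : BddBelow (range φ) := bddBelow_range_of_nonneg_off_ball hbdd x₀ r fun x hx =>
    ((div_pos_iff_of_pos_right (hr.trans_le hx)).1 ((ha.trans_lt hb).trans_le (hlinear x hx))).le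
  refine exists_isFixedPt_of_caristi_or_drop hlsc hφ_bdd hc (mul_pos hc (half_pos hδ)) T
    fun x hne => ?_
  have hd : 0 < dist x (T x) := dist_pos.2 (Ne.symm hne)
  rcases lt_or_ge (dist x (T x)) δ with hnear | hfar
  · exact Or.inl ((hsmall _ hd hnear).trans (hT x))
  · have h_half := hsmall (δ / 2) (half_pos hδ) (half_lt_self hδ)
    have h_mono := hmono (δ / 2) _ (half_pos hδ).le ((half_lt_self hδ).le.trans hfar)
    exact Or.inr (by linarith [hT x])

/-- Li's Theorem 2, case (i). -/
theorem li_theorem2_case_i {X : Type*} [MetricSpace X] [CompleteSpace X] [Nonempty X]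
    (η : ℝ → ℝ) (hη0 : η 0 = 0) (hηnn : ∀ t, 0 ≤ t → 0 ≤ η t)
    (φ : X → ℝ) (hlsc : LowerSemicontinuous φ)
    (hbdd : ∀ S : Set X, Bornology.IsBounded S → BddBelow (φ '' S))
    (x₀ : X) (a : ℝ) (ha : 0 ≤ a)
    (hliminf : ∃ b > a, ∃ r > (0 : ℝ), ∀ x : X, r ≤ dist x x₀ → b ≤ φ x / dist x x₀)
    (hmono : ∀ s t : ℝ, 0 ≤ s → s ≤ t → η s ≤ η t)
    (hliminfη : ∃ c > (0 : ℝ), ∃ δ > (0 : ℝ), ∀ t : ℝ, 0 < t → t < δ → c * t ≤ η t)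
    (T : X → X) (hT : ∀ x, η (dist x (T x)) ≤ φ x - φ (T x)) :
    ∃ x, T x = x :=
  li_theorem2_case_i_general η φ hlsc hbdd x₀ a ha hliminf hmono hliminfη T hT
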